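/- Let A and B be finite abelian groups of orders m and n respectively, with m ≥ 3, and suppose B admits a complete mapping, i.e., a bijection φ : B → B such that the map g ↦ −g + φ(g) is also a bijection of B. If the cycle C_m is A-cordial, then the disjoint union of n copies of the cycle C_m is (A × B)-cordial. -/

import Mathlib

/-- The edge labeling induced by a vertex labeling `c`: edge `{u, v}` gets label `c u + c v`. -/
def edgeLabel {V A : Type*} [AddCommMonoid A] (c : V → A) : Sym2 V → A :=
  Sym2.lift ⟨fun u v => c u + c v, fun _ _ => add_comm _ _⟩

/-- `c` is an `A`-cordial labeling of `G`: the vertex-label classes differ in size by at most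
one, and the induced edge-label classes differ in size by at most one. -/
def IsCordialLabeling {V A : Type*} [AddCommMonoid A] (G : SimpleGraph V) (c : V → A) : Prop :=
  (∀ a b : A, {v : V | c v = a}.ncard ≤ {v : V | c v = b}.ncard + 1) ∧
  (∀ a b : A, {e ∈ G.edgeSet | edgeLabel c e = a}.ncard ≤
      {e ∈ G.edgeSet | edgeLabel c e = b}.ncard + 1)

/-- A graph `G` is `A`-cordial if it admits an `A`-cordial labeling. -/
def IsCordial (A : Type*) [AddCommMonoid A] {V : Type*} (G : SimpleGraph V) : Prop :=
  ∃ c : V → A, IsCordialLabeling G c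

open SimpleGraph

/-- The disjoint union of `n` copies of a graph `G`, one copy for each element of `Fin n`. -/
def disjointCopies {V : Type*} (n : ℕ) (G : SimpleGraph V) : SimpleGraph (Fin n × V) where
  Adj x y := x.1 = y.1 ∧ G.Adj x.2 y.2
  symm := ⟨fun _ _ ⟨h1, h2⟩ => ⟨h1.symm, h2.symm⟩⟩
  loopless := ⟨fun x hx => G.loopless.irrefl x.2 hx.2⟩

/-!
Since `|A| = m` is both the number of vertices and the number of edges of `C_m`, an `A`-cordial
labeling `c` of `C_m` uses every label exactly once on the vertices and exactly once on the
edges. Label vertex `v` of the copy indexed by `g ∈ B` with `(c v, d_v g)`, where the `d_v` are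
permutations of `B` such that `d_u + d_v` is a permutation for every edge `uv`; then the
product labeling is again bijective on vertices and on edges, hence cordial. A complete
mapping `φ` provides such `d_v`: take `id - φ` at vertex `0`, `-id` at odd and `φ` at even
vertices, so that the sums along edges are `-φ`, `-id + φ` and, across the closing edge,
`-φ` or `id`.
-/

open Function Set

open Finset in
lemma Finset.card_filter_eq_one_of_card_eq {X Y : Type*} [Fintype Y] [DecidableEq Y]
    (s : Finset X) (f : X → Y) (hs : s.card = Fintype.card Y)
    (h : ∀ a b, #{x ∈ s | f x = a} ≤ #{x ∈ s | f x = b} + 1) (a : Y) :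
    #{x ∈ s | f x = a} = 1 := by
  have hsum : ∑ b, #{x ∈ s | f x = b} = ∑ _b : Y, 1 := by
    rw [← card_eq_sum_card_fiberwise fun x _ => mem_univ (f x)]
    simp [hs]
  apply le_antisymm
  · by_contra! ha
    have : ∑ _b : Y, 1 < ∑ b, #{x ∈ s | f x = b} :=
      sum_lt_sum (fun b _ => by have := h a b; omega) ⟨a, mem_univ a, ha⟩
    omega
  · by_contra! ha
    have : ∑ b, #{x ∈ s | f x = b} < ∑ _b : Y, 1 :=
      sum_lt_sum (fun b _ => by have := h b a; omega) ⟨a, mem_univ a, ha⟩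
    omega

namespace Set

variable {X Y : Type*} {S : Set X} {f : X → Y}

lemma bijOn_univ_of_ncard_sep_le_succ [Finite X] [Finite Y] (hS : S.ncard = Nat.card Y)
    (h : ∀ a b, {x ∈ S | f x = a}.ncard ≤ {x ∈ S | f x = b}.ncard + 1) :
    BijOn f S univ := by
  classical
  have := Fintype.ofFinite X
  have := Fintype.ofFinite Y
  have hfiber : ∀ a, {x ∈ S | f x = a} = ↑({x ∈ S.toFinset | f x = a} : Finset X) := by
    intro a; ext x; simp
  have hone : ∀ a, {x ∈ S | f x = a}.ncard = 1 := by
    intro a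
    simp only [hfiber, ncard_coe_finset] at h ⊢
    exact Finset.card_filter_eq_one_of_card_eq _ f
      (by rwa [← ncard_eq_toFinset_card', ← Nat.card_eq_fintype_card]) h a
  refine ⟨mapsTo_univ f S, fun x hx y hy hxy => ?_, fun a _ => ?_⟩
  · exact (ncard_le_one_iff (toFinite _)).mp (hone (f x)).le ⟨hx, rfl⟩ ⟨hy, hxy.symm⟩
  · obtain ⟨x, hx, hfx⟩ := nonempty_of_ncard_ne_zero (hone a ▸ one_ne_zero)
    exact ⟨x, hx, hfx⟩

lemma BijOn.ncard_sep_eq_one (hf : BijOn f S univ) (a : Y) : {x ∈ S | f x = a}.ncard = 1 := by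
  obtain ⟨x, hx, rfl⟩ := hf.surjOn (mem_univ a)
  exact ncard_eq_one.mpr ⟨x, Set.ext fun y =>
    ⟨fun ⟨hy, hxy⟩ => hf.injOn hy hx hxy, by rintro rfl; exact ⟨hx, rfl⟩⟩⟩

end Set

@[simp]
lemma edgeLabel_mk {V A : Type*} [AddCommMonoid A] (c : V → A) (u v : V) :
    edgeLabel c s(u, v) = c u + c v := rfl

namespace IsCordialLabeling

variable {V A : Type*} [AddCommMonoid A] {G : SimpleGraph V} {c : V → A}

lemma of_bijective (hV : Bijective c) (hE : BijOn (edgeLabel c) G.edgeSet univ) :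
    IsCordialLabeling G c := by
  refine ⟨fun a b => ?_, fun a b => by rw [hE.ncard_sep_eq_one, hE.ncard_sep_eq_one]; omega⟩
  simp only [← sep_univ (p := fun v => c v = _), hV.bijOn_univ.ncard_sep_eq_one]
  omega

lemma bijective [Finite V] [Finite A] (hc : IsCordialLabeling G c)
    (hV : Nat.card V = Nat.card A) (hE : G.edgeSet.ncard = Nat.card A) :
    Bijective c ∧ BijOn (edgeLabel c) G.edgeSet univ := by
  refine ⟨bijOn_univ.mp (bijOn_univ_of_ncard_sep_le_succ ?_ ?_),
    bijOn_univ_of_ncard_sep_le_succ hE hc.2⟩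
  · rwa [ncard_univ]
  · simpa only [sep_univ] using hc.1

end IsCordialLabeling

lemma cycleGraph_edgeSet_ncard {m : ℕ} (hm : 3 ≤ m) : (cycleGraph m).edgeSet.ncard = m := by
  obtain ⟨k, rfl⟩ : ∃ k, m = k + 3 := ⟨m - 3, by omega⟩
  have hdeg := sum_degrees_eq_twice_card_edges (cycleGraph (k + 3))
  simp only [cycleGraph_degree_three_le, Finset.sum_const, Finset.card_univ, Fintype.card_fin,
    smul_eq_mul] at hdeg
  rw [← coe_edgeFinset, ncard_coe_finset]
  omega

lemma disjointCopies_adj {V : Type*} {n : ℕ} {G : SimpleGraph V} {x y : Fin n × V} :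
    (disjointCopies n G).Adj x y ↔ x.1 = y.1 ∧ G.Adj x.2 y.2 := Iff.rfl

section ProductLabel

variable {V A B : Type*} {n : ℕ}

def productLabel (c : V → A) (d : V → B → B) (β : Fin n ≃ B) : Fin n × V → A × B :=
  fun p => (c p.2, d p.2 (β p.1))

variable {c : V → A} {d : V → B → B}

lemma bijective_productLabel (hc : Bijective c) (hd : ∀ v, Bijective (d v)) (β : Fin n ≃ B) :
    Bijective (productLabel c d β) := by
  refine ⟨fun ⟨i, v⟩ ⟨j, w⟩ h => ?_, fun ⟨a, b⟩ => ?_⟩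
  · obtain ⟨hvw, hij⟩ := Prod.mk.inj h
    obtain rfl : v = w := hc.injective hvw
    obtain rfl : i = j := β.injective ((hd v).injective hij)
    rfl
  · obtain ⟨v, rfl⟩ := hc.surjective a
    obtain ⟨g, rfl⟩ := (hd v).surjective b
    exact ⟨(β.symm g, v), by simp [productLabel]⟩

lemma bijOn_edgeLabel_productLabel [AddCommMonoid A] [AddCommMonoid B] {G : SimpleGraph V}
    (hc : BijOn (edgeLabel c) G.edgeSet univ)
    (hd : ∀ u v, G.Adj u v → Bijective (d u + d v)) (β : Fin n ≃ B) :
    BijOn (edgeLabel (productLabel c d β)) (disjointCopies n G).edgeSet univ := by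
  refine ⟨mapsTo_univ _ _, ?_, fun ⟨a, b⟩ _ => ?_⟩
  · rintro ⟨⟨i, u⟩, ⟨i', v⟩⟩ ⟨hi : i = i', huv : G.Adj u v⟩
      ⟨⟨j, u'⟩, ⟨j', v'⟩⟩ ⟨hj : j = j', huv' : G.Adj u' v'⟩ h
    subst hi hj
    obtain ⟨hA, hB⟩ := Prod.mk.inj h
    rcases Sym2.eq_iff.mp (hc.injOn huv huv' hA) with ⟨rfl, rfl⟩ | ⟨rfl, rfl⟩
    · obtain rfl : i = j := β.injective ((hd _ _ huv).injective hB)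
      rfl
    · obtain rfl : i = j := β.injective ((hd _ _ huv).injective (hB.trans (add_comm _ _)))
      exact Sym2.eq_swap
  · obtain ⟨e, he, rfl⟩ := hc.surjOn (mem_univ a)
    induction e using Sym2.ind with
    | _ u v =>
      obtain ⟨g, rfl⟩ := (hd u v he).surjective b
      exact ⟨s((β.symm g, u), (β.symm g, v)), disjointCopies_adj.mpr ⟨rfl, he⟩,
        by simp [productLabel]⟩

end ProductLabel

section CycleLabel

variable {B : Type*} [AddCommGroup B] {φ : B → B} {k : ℕ}

def cycleLabel (φ : B → B) (k : ℕ) : B → B :=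
  if k = 0 then id - φ else if Odd k then -id else φ

lemma cycleLabel_zero : cycleLabel φ 0 = id - φ := rfl

lemma cycleLabel_of_odd (hk : Odd k) : cycleLabel φ k = -id := by
  simp [cycleLabel, hk, hk.pos.ne']

lemma cycleLabel_of_even (hk : Even k) (hk0 : k ≠ 0) : cycleLabel φ k = φ := by
  simp [cycleLabel, hk0, Nat.not_odd_iff_even.mpr hk]

lemma bijective_cycleLabel (hφ : Bijective φ) (hθ : Bijective (fun g : B => -g + φ g))
    (k : ℕ) : Bijective (cycleLabel φ k) := by
  rcases eq_or_ne k 0 with rfl | hk0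
  · have : id - φ = -(fun g : B => -g + φ g) := by
      ext g; change g - φ g = -(-g + φ g); abel
    rw [cycleLabel_zero, this]
    exact neg_bijective.comp hθ
  rcases Nat.even_or_odd k with hk | hk
  · rw [cycleLabel_of_even hk hk0]; exact hφ
  · rw [cycleLabel_of_odd hk]; exact neg_bijective.comp bijective_id

lemma bijective_cycleLabel_add_succ (hφ : Bijective φ) (hθ : Bijective (fun g : B => -g + φ g))
    (k : ℕ) : Bijective (cycleLabel φ k + cycleLabel φ (k + 1)) := by
  rcases Nat.even_or_odd k with hk | hk
  · rcases eq_or_ne k 0 with rfl | hk0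
    · have : id - φ + -id = -φ := by abel
      rw [cycleLabel_zero, zero_add, cycleLabel_of_odd odd_one, this]
      exact neg_bijective.comp hφ
    · rw [cycleLabel_of_even hk hk0, cycleLabel_of_odd hk.add_one, add_comm]
      exact hθ
  · rw [cycleLabel_of_odd hk, cycleLabel_of_even hk.add_one k.succ_ne_zero]
    exact hθ

lemma bijective_cycleLabel_add_zero (hφ : Bijective φ) (hk0 : k ≠ 0) :
    Bijective (cycleLabel φ k + cycleLabel φ 0) := by
  rw [cycleLabel_zero]
  rcases Nat.even_or_odd k with hk | hk
  · have : φ + (id - φ) = id := by abel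
    rw [cycleLabel_of_even hk hk0, this]
    exact bijective_id
  · have : -id + (id - φ) = -φ := by abel
    rw [cycleLabel_of_odd hk, this]
    exact neg_bijective.comp hφ

lemma bijective_cycleLabel_add_of_adj (hφ : Bijective φ)
    (hθ : Bijective (fun g : B => -g + φ g)) {m : ℕ} {u v : Fin m}
    (h : (cycleGraph m).Adj u v) :
    Bijective (cycleLabel φ u + cycleLabel φ v) := by
  obtain _ | _ | m := m
  · exact u.elim0
  · exact (cycleGraph_one_adj h).elim
  suffices key : ∀ u v : Fin (m + 2), v - u = 1 →
      Bijective (cycleLabel φ u + cycleLabel φ v) by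
    rcases cycleGraph_adj.mp h with h | h
    · rw [add_comm]; exact key v u h
    · exact key u v h
  intro u v huv
  rw [sub_eq_iff_eq_add'.mp huv, Fin.val_add_one]
  split_ifs with hu
  · exact bijective_cycleLabel_add_zero hφ (by simp [hu])
  · exact bijective_cycleLabel_add_succ hφ hθ u

end CycleLabel

/-- Let `A` and `B` be finite abelian groups of orders `m ≥ 3` and `n`, and suppose `B`
admits a complete mapping. If `C_m` is `A`-cordial, then `n` disjoint copies of `C_m`
form an `(A × B)`-cordial graph. -/
theorem disjoint_cycles_cordial (A B : Type*) [AddCommGroup A] [Fintype A]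
    [AddCommGroup B] [Fintype B] (m n : ℕ)
    (hA : Fintype.card A = m) (hB : Fintype.card B = n) (hm : 3 ≤ m)
    (φ : B → B) (hφ : Function.Bijective φ)
    (hθ : Function.Bijective (fun g : B => -g + φ g))
    (hAm : IsCordial A (cycleGraph m)) :
    IsCordial (A × B) (disjointCopies n (cycleGraph m)) := by
  obtain ⟨c, hc⟩ := hAm
  obtain ⟨hV, hE⟩ := hc.bijective (by simp [hA]) (by simp [cycleGraph_edgeSet_ncard hm, hA])
  let β : Fin n ≃ B := (Fintype.equivFinOfCardEq hB).symm
  exact ⟨productLabel c (fun v => cycleLabel φ v) β, .of_bijective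
    (bijective_productLabel hV (fun v => bijective_cycleLabel hφ hθ v) β)
    (bijOn_edgeLabel_productLabel hE (fun _ _ => bijective_cycleLabel_add_of_adj hφ hθ) β)⟩
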